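/- arXiv:2201.07141 — 2 statements merged into one kernel-verified Lean document; each statement's English description precedes it below -/
import Mathlib

section
/- Let Λ be a finite index set equipped with a pseudometric dist. For any matrices m₁, m₂ ∈ Matrix Λ Λ ℂ and any r₁, r₂ ≥ 0, one has ‖m₁ m₂‖_{r₁ + r₂} ≤ ‖m₁‖_{r₁} · ‖m₂‖ + ‖m₁‖ · ‖m₂‖_{r₂}. -/
/-- The l2 -> l2 operator norm of a matrix. -/
noncomputable def matOpNorm {Λ : Type*} [Fintype Λ] [DecidableEq Λ]
    (m : Matrix Λ Λ ℂ) : ℝ :=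
  ‖Matrix.toEuclideanCLM (𝕜 := ℂ) m‖

/-- The quantity ‖m‖_r : the supremum of |⟨ψ, m φ⟩| over l2-unit vectors ψ, φ whose
supports are at distance greater than r (all pairwise distances exceed r). -/
noncomputable def matDistNorm {Λ : Type*} [Fintype Λ] [DecidableEq Λ]
    [PseudoMetricSpace Λ] (m : Matrix Λ Λ ℂ) (r : ℝ) : ℝ :=
  sSup { x : ℝ | ∃ ψ φ : EuclideanSpace ℂ Λ, ‖ψ‖ = 1 ∧ ‖φ‖ = 1 ∧
    (∀ i ∈ Function.support ψ, ∀ j ∈ Function.support φ, r < dist i j) ∧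
    x = ‖(inner ℂ ψ (Matrix.toEuclideanCLM (𝕜 := ℂ) m φ) : ℂ)‖ }

/-!
Split `m₂ φ` into its restriction to the `r₂`-neighbourhood of `supp φ` and the rest. By the
triangle inequality the near part is supported at distance `> r₁` from `supp ψ`, so pairing it with
`m₁` costs at most `‖m₁‖_{r₁} ‖m₂‖`. The far part `w` satisfies `‖w‖² = ⟪w, m₂ φ⟫` with `supp w`
at distance `> r₂` from `supp φ`, hence `‖w‖ ≤ ‖m₂‖_{r₂}`, and pairing it with `m₁` costs at most
`‖m₁‖ ‖m₂‖_{r₂}`.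
-/

open scoped InnerProductSpace

namespace EuclideanSpace

variable {𝕜 ι : Type*} [RCLike 𝕜]

noncomputable def restrict (s : Set ι) (v : EuclideanSpace 𝕜 ι) : EuclideanSpace 𝕜 ι :=
  WithLp.toLp 2 (s.indicator v)

@[simp]
lemma restrict_apply (s : Set ι) (v : EuclideanSpace 𝕜 ι) (k : ι) :
    restrict s v k = s.indicator v k := rfl

lemma support_restrict_subset (s : Set ι) (v : EuclideanSpace 𝕜 ι) :
    Function.support (restrict s v) ⊆ s :=
  Set.support_indicator_subset

lemma restrict_add_restrict_compl (s : Set ι) (v : EuclideanSpace 𝕜 ι) :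
    restrict s v + restrict sᶜ v = v := by
  ext k
  exact Set.indicator_self_add_compl_apply s v k

lemma support_smul_of_ne_zero {c : 𝕜} (hc : c ≠ 0) (v : EuclideanSpace 𝕜 ι) :
    Function.support (c • v) = Function.support v :=
  Function.support_const_smul_of_ne_zero c v hc

variable [Fintype ι]

lemma inner_restrict_self (s : Set ι) (v : EuclideanSpace 𝕜 ι) :
    ⟪restrict s v, v⟫_𝕜 = (‖restrict s v‖ : 𝕜) ^ 2 := by
  rw [← inner_self_eq_norm_sq_to_K, PiLp.inner_apply, PiLp.inner_apply]
  refine Finset.sum_congr rfl fun k _ => ?_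
  by_cases hk : k ∈ s <;> simp [hk]

lemma norm_restrict_le (s : Set ι) (v : EuclideanSpace 𝕜 ι) : ‖restrict s v‖ ≤ ‖v‖ := by
  have h : ‖restrict s v‖ ^ 2 ≤ ‖restrict s v‖ * ‖v‖ := by
    calc ‖restrict s v‖ ^ 2 = ‖⟪restrict s v, v⟫_𝕜‖ := by
          rw [inner_restrict_self, norm_pow, RCLike.norm_ofReal, abs_norm]
      _ ≤ ‖restrict s v‖ * ‖v‖ := norm_inner_le_norm _ _
  nlinarith [norm_nonneg (restrict s v), norm_nonneg v]

end EuclideanSpace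

open EuclideanSpace

section MatDistNorm

variable {Λ : Type*} [Fintype Λ] [DecidableEq Λ]

lemma matOpNorm_nonneg (m : Matrix Λ Λ ℂ) : 0 ≤ matOpNorm m :=
  norm_nonneg _

lemma norm_toEuclideanCLM_apply_le (m : Matrix Λ Λ ℂ) (φ : EuclideanSpace ℂ Λ) :
    ‖Matrix.toEuclideanCLM (𝕜 := ℂ) m φ‖ ≤ matOpNorm m * ‖φ‖ :=
  (Matrix.toEuclideanCLM (𝕜 := ℂ) m).le_opNorm φ

lemma norm_inner_toEuclideanCLM_le (m : Matrix Λ Λ ℂ) (ψ φ : EuclideanSpace ℂ Λ) :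
    ‖⟪ψ, Matrix.toEuclideanCLM (𝕜 := ℂ) m φ⟫_ℂ‖ ≤ matOpNorm m * ‖ψ‖ * ‖φ‖ :=
  calc ‖⟪ψ, Matrix.toEuclideanCLM (𝕜 := ℂ) m φ⟫_ℂ‖
      ≤ ‖ψ‖ * (matOpNorm m * ‖φ‖) :=
        (norm_inner_le_norm _ _).trans (by gcongr; exact norm_toEuclideanCLM_apply_le m φ)
    _ = matOpNorm m * ‖ψ‖ * ‖φ‖ := by ring

variable [PseudoMetricSpace Λ]

lemma matDistNorm_nonneg (m : Matrix Λ Λ ℂ) (r : ℝ) : 0 ≤ matDistNorm m r :=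
  Real.sSup_nonneg <| by
    rintro x ⟨ψ, φ, -, -, -, rfl⟩
    exact norm_nonneg _

lemma norm_inner_le_matDistNorm (m : Matrix Λ Λ ℂ) {r : ℝ} {ψ φ : EuclideanSpace ℂ Λ}
    (hsep : ∀ i ∈ Function.support ψ, ∀ j ∈ Function.support φ, r < dist i j) :
    ‖⟪ψ, Matrix.toEuclideanCLM (𝕜 := ℂ) m φ⟫_ℂ‖ ≤ matDistNorm m r * ‖ψ‖ * ‖φ‖ := by
  rcases eq_or_ne ψ 0 with rfl | hψ
  · simp
  rcases eq_or_ne φ 0 with rfl | hφ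
  · simp
  have hψ' : (‖ψ‖⁻¹ : ℂ) ≠ 0 := by simpa using hψ
  have hφ' : (‖φ‖⁻¹ : ℂ) ≠ 0 := by simpa using hφ
  have hunit : ‖⟪(‖ψ‖⁻¹ : ℂ) • ψ, Matrix.toEuclideanCLM (𝕜 := ℂ) m ((‖φ‖⁻¹ : ℂ) • φ)⟫_ℂ‖
      ≤ matDistNorm m r := by
    refine le_csSup ⟨matOpNorm m, ?_⟩ ⟨_, _, ?_, ?_, ?_, rfl⟩
    · rintro x ⟨ψ, φ, hψ, hφ, -, rfl⟩
      simpa [hψ, hφ] using norm_inner_toEuclideanCLM_le m ψ φ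
    · simp [norm_smul, hψ]
    · simp [norm_smul, hφ]
    · rwa [support_smul_of_ne_zero hψ', support_smul_of_ne_zero hφ']
  rw [map_smul, inner_smul_left, inner_smul_right] at hunit
  simp only [map_inv₀, Complex.conj_ofReal, Complex.norm_mul, norm_inv, Complex.norm_real,
    norm_norm] at hunit
  rw [← mul_assoc, ← mul_inv,
    inv_mul_le_iff₀ (mul_pos (norm_pos_iff.2 hψ) (norm_pos_iff.2 hφ))] at hunit
  linarith

lemma norm_restrict_toEuclideanCLM_le_matDistNorm (m : Matrix Λ Λ ℂ) {r : ℝ} {t : Set Λ}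
    {φ : EuclideanSpace ℂ Λ} (hsep : ∀ k ∈ t, ∀ j ∈ Function.support φ, r < dist k j) :
    ‖restrict t (Matrix.toEuclideanCLM (𝕜 := ℂ) m φ)‖ ≤ matDistNorm m r * ‖φ‖ := by
  set w := restrict t (Matrix.toEuclideanCLM (𝕜 := ℂ) m φ)
  have hsq : ‖w‖ ^ 2 ≤ matDistNorm m r * ‖φ‖ * ‖w‖ :=
    calc ‖w‖ ^ 2 = ‖⟪w, Matrix.toEuclideanCLM (𝕜 := ℂ) m φ⟫_ℂ‖ := by
          rw [inner_restrict_self, norm_pow, RCLike.norm_ofReal, abs_norm]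
      _ ≤ matDistNorm m r * ‖w‖ * ‖φ‖ :=
          norm_inner_le_matDistNorm m fun k hk => hsep k (support_restrict_subset _ _ hk)
      _ = matDistNorm m r * ‖φ‖ * ‖w‖ := by ring
  nlinarith [norm_nonneg w, mul_nonneg (matDistNorm_nonneg m r) (norm_nonneg φ)]

end MatDistNorm

theorem matDistNorm_mul_le_general
    {Λ : Type*} [Fintype Λ] [DecidableEq Λ] [PseudoMetricSpace Λ]
    (m₁ m₂ : Matrix Λ Λ ℂ) (r₁ r₂ : ℝ) :
    matDistNorm (m₁ * m₂) (r₁ + r₂) ≤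
      matDistNorm m₁ r₁ * matOpNorm m₂ + matOpNorm m₁ * matDistNorm m₂ r₂ := by
  refine Real.sSup_le ?_ <| add_nonneg
    (mul_nonneg (matDistNorm_nonneg m₁ r₁) (matOpNorm_nonneg m₂))
    (mul_nonneg (matOpNorm_nonneg m₁) (matDistNorm_nonneg m₂ r₂))
  rintro x ⟨ψ, φ, hψ, hφ, hsep, rfl⟩
  set v := Matrix.toEuclideanCLM (𝕜 := ℂ) m₂ φ
  set s := {k | ∃ j ∈ Function.support φ, dist k j ≤ r₂}
  have hnear : ∀ i ∈ Function.support ψ, ∀ k ∈ Function.support (restrict s v), r₁ < dist i k := by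
    intro i hi k hk
    obtain ⟨j, hj, hkj⟩ := support_restrict_subset s v hk
    linarith [hsep i hi j hj, dist_triangle i k j]
  have hfar : ∀ k ∈ sᶜ, ∀ j ∈ Function.support φ, r₂ < dist k j := by
    intro k hk j hj
    exact lt_of_not_ge fun hkj => hk ⟨j, hj, hkj⟩
  rw [map_mul, mul_apply_eq_comp]
  change ‖⟪ψ, Matrix.toEuclideanCLM (𝕜 := ℂ) m₁ v⟫_ℂ‖ ≤ _
  rw [← restrict_add_restrict_compl s v, map_add, inner_add_right]
  calc _ ≤ matDistNorm m₁ r₁ * ‖ψ‖ * ‖restrict s v‖ + matOpNorm m₁ * ‖ψ‖ * ‖restrict sᶜ v‖ :=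
        (norm_add_le _ _).trans <| add_le_add (norm_inner_le_matDistNorm m₁ hnear)
          (norm_inner_toEuclideanCLM_le m₁ _ _)
    _ ≤ matDistNorm m₁ r₁ * matOpNorm m₂ + matOpNorm m₁ * matDistNorm m₂ r₂ := by
        rw [hψ, mul_one, mul_one]
        gcongr
        · exact matDistNorm_nonneg m₁ r₁
        · simpa [hφ] using (norm_restrict_le s v).trans (norm_toEuclideanCLM_apply_le m₂ φ)
        · exact matOpNorm_nonneg m₁
        · simpa [hφ] using norm_restrict_toEuclideanCLM_le_matDistNorm m₂ hfar

/-- Submultiplicative-type bound: ‖m₁ m₂‖_{r₁+r₂} ≤ ‖m₁‖_{r₁} ‖m₂‖ + ‖m₁‖ ‖m₂‖_{r₂}. -/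
theorem matDistNorm_mul_le
    {Λ : Type*} [Fintype Λ] [DecidableEq Λ] [PseudoMetricSpace Λ]
    (m₁ m₂ : Matrix Λ Λ ℂ) (r₁ r₂ : ℝ) (hr₁ : 0 ≤ r₁) (hr₂ : 0 ≤ r₂) :
    matDistNorm (m₁ * m₂) (r₁ + r₂) ≤
      matDistNorm m₁ r₁ * matOpNorm m₂ + matOpNorm m₁ * matDistNorm m₂ r₂ :=
  matDistNorm_mul_le_general m₁ m₂ r₁ r₂
end

section
/- Let n be a positive integer, let V ∈ Matrix (Fin n) (Fin n) ℂ be Hermitian, and let H : ℝ → Matrix (Fin n) (Fin n) ℂ be differentiable with H(B) Hermitian for all B and ∂_B H(B) = [[V, H(B)], H(B)]. Then d/dB Tr((H(B) − V)²) = −2 Tr([V, H(B)] · [V, H(B)]†) ≤ 0; that is, the potential Tr((H(B) − V)²) is non-increasing along the double bracket flow. -/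
/-!
Along the flow, d/dB Tr((H - V)²) = 2 Tr(H' (H - V)) with H' = ⁅C, H⁆ and C = ⁅V, H⁆.
Invariance of the trace form, Tr(⁅X, K⁆ Y) = Tr(X ⁅K, Y⁆), turns this into 2 Tr(C ⁅H, H - V⁆)
= 2 Tr(C²), and C is skew-Hermitian as a commutator of Hermitian matrices, so
Tr(C²) = -Tr(C C†) ≤ 0.
-/

open scoped Matrix

attribute [local instance] Matrix.frobeniusNormedAddCommGroup Matrix.frobeniusNormedSpace

open scoped ComplexOrder

namespace Matrix

section Algebra

variable {n R : Type*} [Fintype n]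

theorem trace_lie_mul [CommRing R] (A B C : Matrix n n R) :
    (⁅A, B⁆ * C).trace = (A * ⁅B, C⁆).trace := by
  simp only [Ring.lie_def, Matrix.sub_mul, Matrix.mul_sub, trace_sub, Matrix.mul_assoc]
  rw [trace_mul_comm B (A * C), Matrix.mul_assoc]

theorem conjTranspose_lie [Ring R] [StarRing R] (A B : Matrix n n R) :
    ⁅A, B⁆ᴴ = ⁅Bᴴ, Aᴴ⁆ := by
  simp only [Ring.lie_def, conjTranspose_sub, conjTranspose_mul]

theorem IsHermitian.conjTranspose_lie [Ring R] [StarRing R] {A B : Matrix n n R}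
    (hA : A.IsHermitian) (hB : B.IsHermitian) : ⁅A, B⁆ᴴ = -⁅A, B⁆ := by
  rw [Matrix.conjTranspose_lie, hA.eq, hB.eq, Ring.lie_def, Ring.lie_def, neg_sub]

theorem trace_lie_lie_mul_sub_of_isHermitian [CommRing R] [StarRing R] {V K : Matrix n n R}
    (hV : V.IsHermitian) (hK : K.IsHermitian) :
    (⁅⁅V, K⁆, K⁆ * (K - V)).trace = -(⁅V, K⁆ * ⁅V, K⁆ᴴ).trace := by
  have hKV : ⁅K, K - V⁆ = ⁅V, K⁆ := by
    simp only [Ring.lie_def, Matrix.mul_sub, Matrix.sub_mul]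
    abel
  rw [trace_lie_mul, hKV, hV.conjTranspose_lie hK, Matrix.mul_neg, trace_neg, neg_neg]

end Algebra

section Calculus

attribute [local instance] frobeniusNormedRing frobeniusNormedAlgebra

variable {m 𝕜 : Type*} [Fintype m] [RCLike 𝕜] {f : ℝ → Matrix m m 𝕜} {f' : Matrix m m 𝕜}
  {t : ℝ}

theorem _root_.HasDerivAt.matrix_trace (hf : HasDerivAt f f' t) :
    HasDerivAt (fun s => (f s).trace) f'.trace t :=
  ((traceLinearMap m 𝕜 𝕜).restrictScalars ℝ).toContinuousLinearMap.hasFDerivAt.comp_hasDerivAt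
    t hf

theorem _root_.HasDerivAt.matrix_trace_sq [DecidableEq m] (hf : HasDerivAt f f' t) :
    HasDerivAt (fun s => (f s ^ 2).trace) (2 * (f' * f t).trace) t := by
  have hsq : HasDerivAt (fun s => f s * f s) (f' * f t + f t * f') t := hf.fun_mul hf
  simp only [sq]
  convert hsq.matrix_trace using 1
  rw [trace_add, trace_mul_comm (f t) f', two_mul]

end Calculus

end Matrix

theorem potential_nonincreasing_of_doubleBracketFlow_general
    (n : ℕ) (V : Matrix (Fin n) (Fin n) ℂ) (hV : V.IsHermitian)
    (H : ℝ → Matrix (Fin n) (Fin n) ℂ)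
    (hherm : ∀ B, (H B).IsHermitian)
    (hderiv : ∀ B, HasDerivAt H (⁅⁅V, H B⁆, H B⁆) B) :
    ∀ B : ℝ,
      HasDerivAt (fun B => ((H B - V) ^ 2).trace)
        (-2 * (⁅V, H B⁆ * (⁅V, H B⁆)ᴴ).trace) B ∧
      -2 * (⁅V, H B⁆ * (⁅V, H B⁆)ᴴ).trace ≤ 0 := by
  intro B
  have hpot := ((hderiv B).sub_const V).matrix_trace_sq
  rw [Matrix.trace_lie_lie_mul_sub_of_isHermitian hV (hherm B), mul_neg, ← neg_mul] at hpot
  have hnonneg : 0 ≤ (⁅V, H B⁆ * (⁅V, H B⁆)ᴴ).trace :=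
    (Matrix.posSemidef_self_mul_conjTranspose _).trace_nonneg
  exact ⟨hpot, mul_nonpos_of_nonpos_of_nonneg (by norm_num) hnonneg⟩

/-- The potential Tr((H(B) - V)^2) is non-increasing along the double bracket flow,
with derivative -2 Tr([V,H][V,H]†) ≤ 0. -/
theorem potential_nonincreasing_of_doubleBracketFlow
    (n : ℕ) (hn : 0 < n) (V : Matrix (Fin n) (Fin n) ℂ) (hV : V.IsHermitian)
    (H : ℝ → Matrix (Fin n) (Fin n) ℂ)
    (hherm : ∀ B, (H B).IsHermitian)
    (hderiv : ∀ B, HasDerivAt H (⁅⁅V, H B⁆, H B⁆) B) :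
    ∀ B : ℝ,
      HasDerivAt (fun B => ((H B - V) ^ 2).trace)
        (-2 * (⁅V, H B⁆ * (⁅V, H B⁆)ᴴ).trace) B ∧
      -2 * (⁅V, H B⁆ * (⁅V, H B⁆)ᴴ).trace ≤ 0 :=
  potential_nonincreasing_of_doubleBracketFlow_general n V hV H hherm hderiv
end
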